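/- arXiv:2603.00396 — 2 statements merged into one kernel-verified Lean document; each statement's English description precedes it below -/
import Mathlib

section
/- Let S, A be finite sets, γ ∈ (0,1), R : S × A → ℝ a reward, T : S × A → (S → ℝ) transition probabilities, and let a finite group G act on S via a bijection L_g and on A via a bijection K_g such that R(L_g s, K_g a) = R(s,a) and T(L_g s, K_g a)(L_g s') = T(s,a)(s') for all s, s', a, g. Define the Bellman operator (𝔅Q)(s,a) = Σ_{s'} T(s,a)(s') · (R(s,a) + γ · max_{a'} Q(s', a')). Then 𝔅 maps G-invariant Q-functions to G-invariant Q-functions: if Q(L_g s, K_g a) = Q(s,a) for all s, a, g, then (𝔅Q)(L_g s, K_g a) = (𝔅Q)(s,a) for all s, a, g. -/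
open Finset

/-- The Bellman operator of a symmetric MDP maps G-invariant Q-functions to
G-invariant Q-functions. -/
theorem stmt3 {S A G : Type*} [Fintype S] [Fintype A] [Nonempty A] [Group G]
    (γ : ℝ) (hγ : γ ∈ Set.Ioo (0 : ℝ) 1)
    (R : S → A → ℝ) (T : S → A → S → ℝ)
    (L : G → S → S) (K : G → A → A)
    (hLbij : ∀ g, Function.Bijective (L g)) (hKbij : ∀ g, Function.Bijective (K g))
    (hL1 : L 1 = id) (hLmul : ∀ g h : G, L (g * h) = L g ∘ L h)
    (hK1 : K 1 = id) (hKmul : ∀ g h : G, K (g * h) = K g ∘ K h)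
    (hR : ∀ (g : G) (s : S) (a : A), R (L g s) (K g a) = R s a)
    (hT : ∀ (g : G) (s : S) (a : A) (s' : S), T (L g s) (K g a) (L g s') = T s a s')
    (𝔅 : (S → A → ℝ) → (S → A → ℝ))
    (h𝔅 : ∀ (Q : S → A → ℝ) (s : S) (a : A),
      𝔅 Q s a = ∑ s' : S, T s a s' * (R s a + γ * (univ.sup' univ_nonempty fun a' => Q s' a')))
    (Q : S → A → ℝ)
    (hQ : ∀ (g : G) (s : S) (a : A), Q (L g s) (K g a) = Q s a) :
    ∀ (g : G) (s : S) (a : A), 𝔅 Q (L g s) (K g a) = 𝔅 Q s a := by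
  intro g s a
  have hsup : ∀ s' : S,
      (univ.sup' univ_nonempty fun a' => Q (L g s') a') =
      (univ.sup' univ_nonempty fun a' => Q s' a') := by
    intro s'
    apply le_antisymm
    · apply Finset.sup'_le
      intro a' _
      obtain ⟨b, rfl⟩ := (hKbij g).2 a'
      rw [hQ]
      exact Finset.le_sup' _ (mem_univ b)
    · apply Finset.sup'_le
      intro a' _
      rw [← hQ g s' a']
      exact Finset.le_sup' _ (mem_univ (K g a'))
  rw [h𝔅, h𝔅]
  rw [← Fintype.sum_bijective (L g) (hLbij g) _ _ (fun s' => rfl)]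
  refine Finset.sum_congr rfl fun s' _ => ?_
  rw [hT, hR, hsup]
end

section
/- Let S, A be finite nonempty sets, γ ∈ (0,1), and suppose a finite group G acts on S and A via bijections L_g, K_g leaving R and T invariant (R(L_g s, K_g a) = R(s,a) and T(L_g s, K_g a)(L_g s') = T(s,a)(s')). Then the unique fixed point Q* of the Bellman operator 𝔅 is G-invariant: Q*(L_g s, K_g a) = Q*(s,a) for all g, s, a. -/
open Finset

/-- The unique fixed point `Q*` of the Bellman operator of a symmetric MDP is
G-invariant. -/
theorem stmt5 {S A G : Type*} [Fintype S] [Fintype A] [Nonempty S] [Nonempty A] [Group G]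
    (γ : ℝ) (hγ : γ ∈ Set.Ioo (0 : ℝ) 1)
    (R : S → A → ℝ) (T : S → A → S → ℝ)
    (hTnonneg : ∀ s a s', 0 ≤ T s a s')
    (hTsum : ∀ s a, ∑ s' : S, T s a s' = 1)
    (L : G → S → S) (K : G → A → A)
    (hLbij : ∀ g, Function.Bijective (L g)) (hKbij : ∀ g, Function.Bijective (K g))
    (hL1 : L 1 = id) (hLmul : ∀ g h : G, L (g * h) = L g ∘ L h)
    (hK1 : K 1 = id) (hKmul : ∀ g h : G, K (g * h) = K g ∘ K h)
    (hR : ∀ (g : G) (s : S) (a : A), R (L g s) (K g a) = R s a)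
    (hT : ∀ (g : G) (s : S) (a : A) (s' : S), T (L g s) (K g a) (L g s') = T s a s')
    (𝔅 : (S → A → ℝ) → (S → A → ℝ))
    (h𝔅 : ∀ (Q : S → A → ℝ) (s : S) (a : A),
      𝔅 Q s a = ∑ s' : S, T s a s' * (R s a + γ * (univ.sup' univ_nonempty fun a' => Q s' a')))
    (Qstar : S → A → ℝ)
    (hfix : 𝔅 Qstar = Qstar)
    (huniq : ∀ Q : S → A → ℝ, 𝔅 Q = Q → Q = Qstar) :
    ∀ (g : G) (s : S) (a : A), Qstar (L g s) (K g a) = Qstar s a := by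
  intro g s a
  have key : (fun s a => Qstar (L g s) (K g a)) = Qstar := by
    apply huniq
    funext s a
    have hsup : ∀ t : S,
        (univ.sup' univ_nonempty fun a' => Qstar (L g t) (K g a')) =
        (univ.sup' univ_nonempty fun a' => Qstar (L g t) a') := by
      intro t
      apply le_antisymm
      · exact Finset.sup'_le _ _ fun a' _ => Finset.le_sup' (fun a' => Qstar (L g t) a') (Finset.mem_univ (K g a'))
      · apply Finset.sup'_le
        intro a' _
        obtain ⟨b, hb⟩ := (hKbij g).surjective a'
        rw [← hb]
        exact Finset.le_sup' (fun a' => Qstar (L g t) (K g a')) (Finset.mem_univ b)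
    calc 𝔅 (fun s a => Qstar (L g s) (K g a)) s a
        = ∑ t : S, T s a t * (R s a + γ * (univ.sup' univ_nonempty fun a' => Qstar (L g t) a')) := by
          rw [h𝔅]; exact Finset.sum_congr rfl fun t _ => by rw [hsup]
      _ = ∑ t : S, T (L g s) (K g a) (L g t) *
            (R (L g s) (K g a) + γ * (univ.sup' univ_nonempty fun a' => Qstar (L g t) a')) := by
          exact Finset.sum_congr rfl fun t _ => by rw [hT, hR]
      _ = ∑ s' : S, T (L g s) (K g a) s' *
            (R (L g s) (K g a) + γ * (univ.sup' univ_nonempty fun a' => Qstar s' a')) := by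
          exact (Fintype.sum_bijective (L g) (hLbij g) _ _ fun t => rfl)
      _ = 𝔅 Qstar (L g s) (K g a) := (h𝔅 Qstar (L g s) (K g a)).symm
      _ = Qstar (L g s) (K g a) := by rw [hfix]
  exact congrFun (congrFun key s) a
end
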